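/- arXiv:0803.0145 — 2 statements merged into one kernel-verified Lean document; each statement's English description precedes it below -/
import Mathlib

section
/- The function Ψ_{λ1,λ2}(p1,p2) defined for integers p1 ≤ p2 by Ψ_{λ1,λ2}(p1,p2) = ∑_{p1 ≤ m ≤ p2} q^{λ1 m} q^{λ2(p1+p2-m)} / ((m-p1)_q! (p2-m)_q!), and Ψ_{λ1,λ2}(p1,p2) = 0 for p1 > p2, satisfies the q-deformed gl_2 Toda chain eigenvalue equation: Ψ(p1+1,p2) + (1-q^{p2-p1+1}) Ψ(p1,p2+1) = (q^{λ1}+q^{λ2}) Ψ(p1,p2) for all integers p1, p2. -/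
open Finset

/-- q-factorial `(n)_q!` (equal to 1 for `n ≤ 0`). -/
noncomputable def qfact (q : ℝ) (n : ℤ) : ℝ := ∏ j ∈ Finset.Icc 1 n.toNat, (1 - q ^ j)

/-- The q-deformed `gl_2` Whittaker function. -/
noncomputable def Psi (q lam1 lam2 : ℝ) (p1 p2 : ℤ) : ℝ :=
  if p1 ≤ p2 then
    ∑ m ∈ Finset.Icc p1 p2,
      q ^ (lam1 * (m : ℝ) + lam2 * ((p1 : ℝ) + (p2 : ℝ) - (m : ℝ))) /
        (qfact q (m - p1) * qfact q (p2 - m))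
  else 0

/-!
With `x = q^λ₁`, `y = q^λ₂` one has `Ψ(p, p + n) = (xy)^p E_n(x, y)`, where
`E_n(x, y) = ∑_{k+l=n} x^k y^l / ((k)_q! (l)_q!)`.
Since `(1 - q^k) / (k)_q! = 1 / (k-1)_q!`, the q-difference `E_{n+1}(x, y) - E_{n+1}(qx, y)` equals
`x E_n(x, y)`, and symmetrically in `y`. By homogeneity `q^{n+1} E_{n+1}(x, y) = E_{n+1}(qx, qy)`,
so passing from `(x, y)` to `(qx, qy)` through `(qx, y)` gives
`(1 - q^{n+1}) E_{n+1}(x, y) = x E_n(x, y) + y E_n(qx, y)`, and one more q-difference turns this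
into the three-term Toda recurrence.
-/

lemma qfact_natCast_succ (q : ℝ) (k : ℕ) :
    qfact q ((k + 1 : ℕ) : ℤ) = qfact q k * (1 - q ^ (k + 1)) := by
  simp only [qfact, Int.toNat_natCast]
  exact prod_Icc_succ_top (Nat.le_add_left 1 k) _

lemma qfact_ne_zero {q : ℝ} (hq : ∀ k : ℕ, 0 < k → q ^ k ≠ 1) (n : ℤ) :
    qfact q n ≠ 0 :=
  prod_ne_zero_iff.mpr fun j hj => sub_ne_zero.mpr (hq j (mem_Icc.mp hj).1).symm

/-- The coefficient of `tⁿ` in `e_q(xt) e_q(yt)`, i.e. the Rogers–Szegő polynomial `H_n(x, y)`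
divided by `(n)_q!`. -/
noncomputable def qExpProdCoeff (q x y : ℝ) (n : ℕ) : ℝ :=
  ∑ kl ∈ antidiagonal n, x ^ kl.1 * y ^ kl.2 / (qfact q kl.1 * qfact q kl.2)

@[simp]
lemma qExpProdCoeff_zero (q x y : ℝ) : qExpProdCoeff q x y 0 = 1 := by
  simp [qExpProdCoeff, qfact]

lemma qExpProdCoeff_mul_mul (q c x y : ℝ) (n : ℕ) :
    qExpProdCoeff q (c * x) (c * y) n = c ^ n * qExpProdCoeff q x y n := by
  rw [qExpProdCoeff, qExpProdCoeff, mul_sum]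
  refine sum_congr rfl fun kl hkl => ?_
  rw [← mem_antidiagonal.mp hkl]
  ring

lemma qExpProdCoeff_comm (q x y : ℝ) (n : ℕ) :
    qExpProdCoeff q x y n = qExpProdCoeff q y x n := by
  rw [qExpProdCoeff, qExpProdCoeff, ← Nat.sum_antidiagonal_swap]
  simp only [Prod.fst_swap, Prod.snd_swap, mul_comm]

lemma qExpProdCoeff_succ_sub_left {q : ℝ} (hq : ∀ k : ℕ, 0 < k → q ^ k ≠ 1)
    (x y : ℝ) (n : ℕ) :
    qExpProdCoeff q x y (n + 1) - qExpProdCoeff q (q * x) y (n + 1) =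
      x * qExpProdCoeff q x y n := by
  rw [qExpProdCoeff, qExpProdCoeff, ← sum_sub_distrib, Nat.sum_antidiagonal_succ, qExpProdCoeff,
    mul_sum]
  simp only [pow_zero, sub_self, zero_add]
  refine sum_congr rfl fun kl _ => ?_
  have hk := qfact_ne_zero hq kl.1
  have hl := qfact_ne_zero hq kl.2
  have hq' : 1 - q ^ (kl.1 + 1) ≠ 0 := sub_ne_zero.mpr (hq _ kl.1.succ_pos).symm
  rw [qfact_natCast_succ]
  field_simp
  ring

lemma qExpProdCoeff_succ_sub_right {q : ℝ} (hq : ∀ k : ℕ, 0 < k → q ^ k ≠ 1)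
    (x y : ℝ) (n : ℕ) :
    qExpProdCoeff q x y (n + 1) - qExpProdCoeff q x (q * y) (n + 1) =
      y * qExpProdCoeff q x y n := by
  rw [qExpProdCoeff_comm q x y, qExpProdCoeff_comm q x, qExpProdCoeff_comm q x y n]
  exact qExpProdCoeff_succ_sub_left hq y x n

lemma one_sub_pow_mul_qExpProdCoeff_succ {q : ℝ} (hq : ∀ k : ℕ, 0 < k → q ^ k ≠ 1)
    (x y : ℝ) (n : ℕ) :
    (1 - q ^ (n + 1)) * qExpProdCoeff q x y (n + 1) =
      x * qExpProdCoeff q x y n + y * qExpProdCoeff q (q * x) y n := by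
  linear_combination qExpProdCoeff_succ_sub_left hq x y n +
    qExpProdCoeff_succ_sub_right hq (q * x) y n + qExpProdCoeff_mul_mul q q x y (n + 1)

lemma one_sub_mul_qExpProdCoeff_one {q : ℝ} (hq : ∀ k : ℕ, 0 < k → q ^ k ≠ 1)
    (x y : ℝ) :
    (1 - q) * qExpProdCoeff q x y 1 = x + y := by
  simpa using one_sub_pow_mul_qExpProdCoeff_succ hq x y 0

lemma qExpProdCoeff_toda {q : ℝ} (hq : ∀ k : ℕ, 0 < k → q ^ k ≠ 1) (x y : ℝ) (n : ℕ) :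
    x * y * qExpProdCoeff q x y n + (1 - q ^ (n + 2)) * qExpProdCoeff q x y (n + 2) =
      (x + y) * qExpProdCoeff q x y (n + 1) := by
  linear_combination one_sub_pow_mul_qExpProdCoeff_succ hq x y (n + 1) -
    y * qExpProdCoeff_succ_sub_left hq x y n

lemma Psi_of_lt (q lam1 lam2 : ℝ) {p1 p2 : ℤ} (h : p2 < p1) : Psi q lam1 lam2 p1 p2 = 0 :=
  if_neg (not_le.mpr h)

lemma Psi_add_natCast {q : ℝ} (hq : 0 < q) (lam1 lam2 : ℝ) (p : ℤ) (n : ℕ) :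
    Psi q lam1 lam2 p (p + n) =
      (q ^ lam1 * q ^ lam2) ^ p * qExpProdCoeff q (q ^ lam1) (q ^ lam2) n := by
  rw [Psi, if_pos (by omega), qExpProdCoeff, mul_sum]
  symm
  refine sum_nbij' (fun kl => p + kl.1) (fun m => ((m - p).toNat, (p + n - m).toNat))
    ?_ ?_ ?_ ?_ ?_ <;> try
      (intro a ha
       simp only [HasAntidiagonal.mem_antidiagonal, mem_Icc, Prod.ext_iff] at ha ⊢
       omega)
  rintro ⟨k, l⟩ hkl
  obtain rfl : k + l = n := mem_antidiagonal.mp hkl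
  have hk : p + (k : ℤ) - p = k := by ring
  have hl : p + ((k + l : ℕ) : ℤ) - (p + k) = l := by push_cast; ring
  have hexp : lam1 * ((p + k : ℤ) : ℝ) +
      lam2 * ((p : ℝ) + ((p + (k + l : ℕ) : ℤ) : ℝ) - ((p + k : ℤ) : ℝ)) =
        (lam1 + lam2) * p + lam1 * k + lam2 * l := by
    push_cast; ring
  rw [hk, hl, hexp, Real.rpow_add hq, Real.rpow_add hq, Real.rpow_mul_intCast hq.le,
    Real.rpow_mul_natCast hq.le, Real.rpow_mul_natCast hq.le, Real.rpow_add hq]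
  ring

/-- The `gl_2` q-Toda eigenvalue equation for the first Hamiltonian. -/
theorem Psi_qToda (q lam1 lam2 : ℝ) (hq0 : 0 < q) (hq1 : q < 1) (p1 p2 : ℤ) :
    Psi q lam1 lam2 (p1 + 1) p2 + (1 - q ^ (p2 - p1 + 1)) * Psi q lam1 lam2 p1 (p2 + 1)
      = (q ^ lam1 + q ^ lam2) * Psi q lam1 lam2 p1 p2 := by
  have hq : ∀ k : ℕ, 0 < k → q ^ k ≠ 1 := fun k hk => (pow_lt_one₀ hq0.le hq1 hk.ne').ne
  rcases lt_or_ge p2 p1 with h | h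
  · rw [Psi_of_lt q lam1 lam2 (by omega : p2 < p1 + 1), Psi_of_lt q lam1 lam2 h]
    rcases (show p2 + 1 ≤ p1 by omega).eq_or_lt with rfl | h'
    · simp
    · simp [Psi_of_lt q lam1 lam2 h']
  obtain ⟨n, rfl⟩ := Int.le.dest h
  rw [show p1 + (n : ℤ) - p1 + 1 = ((n + 1 : ℕ) : ℤ) by push_cast; ring, zpow_natCast,
    show p1 + (n : ℤ) + 1 = p1 + ((n + 1 : ℕ) : ℤ) by push_cast; ring, Psi_add_natCast hq0,
    Psi_add_natCast hq0]
  rcases n with _ | n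
  · rw [Psi_of_lt q lam1 lam2 (by omega), qExpProdCoeff_zero]
    linear_combination
      (q ^ lam1 * q ^ lam2) ^ p1 * one_sub_mul_qExpProdCoeff_one hq (q ^ lam1) (q ^ lam2)
  · rw [show p1 + ((n + 1 : ℕ) : ℤ) = p1 + 1 + n by push_cast; ring, Psi_add_natCast hq0,
      zpow_add_one₀ (by positivity)]
    linear_combination
      (q ^ lam1 * q ^ lam2) ^ p1 * qExpProdCoeff_toda hq (q ^ lam1) (q ^ lam2) n
end

section
/- With ψ̃ as above, the recursive relation ψ̃^{(ℓ+1)}_{λ}(p_{ℓ+1}) = ∑ z_{ℓ+1}^{∑_{i=1}^{ℓ+1} p_{ℓ+1,i} − ∑_{i=1}^{ℓ} p_{ℓ,i}} ∏_{i=1}^{ℓ} C(p_{ℓ+1,i+1} − p_{ℓ+1,i}, p_{ℓ,i} − p_{ℓ+1,i}) · ψ̃^{(ℓ)}_{λ'}(p_ℓ) holds, where the sum is over integer tuples p_{ℓ,i} with p_{ℓ+1,i} ≤ p_{ℓ,i} ≤ p_{ℓ+1,i+1}, C(n,k) is the ordinary binomial coefficient, λ' = (λ_1,…,λ_ℓ),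 and ψ̃^{(ℓ)} is defined by the same product-of-elementary-symmetric-polynomials formula in variables z_1,…,z_ℓ. -/
open Finset

/-- The `r`-th elementary symmetric polynomial in `n` variables. -/
noncomputable def esymm (n r : ℕ) (z : Fin n → ℝ) : ℝ :=
  ∑ s ∈ Finset.powersetCard r (Finset.univ : Finset (Fin n)), ∏ i ∈ s, z i

/-- `ψ̃(p) = e_m(z)^{p_1} ∏_{i=1}^{m-1} e_{m-i}(z)^{p_{i+1}-p_i}`. -/
noncomputable def psiT : (m : ℕ) → (Fin m → ℝ) → (Fin m → ℤ) → ℝ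
  | 0, _, _ => 1
  | m + 1, z, p =>
      esymm (m + 1) (m + 1) z ^ p 0 *
        ∏ i : Fin m, esymm (m + 1) (m - i.1) z ^ (p (Fin.succ i) - p (Fin.castSucc i))

/-! Write `z = (w, t)` with `t = z_{ℓ+1}`. Then `e_r(z) = e_r(w) + t e_{r-1}(w)` and
`e_{ℓ+1}(z) = t e_ℓ(w)`, so expanding each factor `e_{ℓ-i}(z)^{p_{i+1}-p_i}` by the binomial
theorem, with the summation index written as `p_{ℓ,i} ∈ [p_i, p_{i+1}]`, turns `ψ̃^{(ℓ+1)}(p)` into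
a sum of monomials in `t` and the `e_r(w)`. Each such monomial regroups to `ψ̃^{(ℓ)}(p_ℓ)` by Abel
summation, `ψ̃^{(m)}(p) = ∏_i (e_{m-i} / e_{m-i-1})^{p_i}`, which is legitimate since positivity of
the variables makes every `e_r(w)` nonzero. -/

theorem Multiset.esymm_cons_succ {R : Type*} [CommSemiring R] (a : R) (s : Multiset R) (n : ℕ) :
    (a ::ₘ s).esymm (n + 1) = s.esymm (n + 1) + a * s.esymm n := by
  simp [Multiset.esymm, Multiset.powersetCard_cons, Multiset.sum_map_mul_left]

theorem Finset.prod_zpow_eq_zpow_sum₀ {ι G₀ : Type*} [CommGroupWithZero G₀] {a : G₀} (ha : a ≠ 0)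
    (s : Finset ι) (f : ι → ℤ) : ∏ i ∈ s, a ^ f i = a ^ ∑ i ∈ s, f i := by
  induction s using Finset.cons_induction with
  | empty => simp
  | cons j s _ ih => rw [prod_cons, sum_cons, ih, zpow_add₀ ha]

theorem add_zpow_eq_sum_Icc {K : Type*} [Field K] (x y : K) {a b : ℤ} (hab : a ≤ b) :
    (x + y) ^ (b - a) =
      ∑ c ∈ Icc a b, x ^ (c - a) * y ^ (b - c) * ((b - a).toNat.choose (c - a).toNat : K) := by
  obtain ⟨n, hn⟩ := Int.eq_ofNat_of_zero_le (sub_nonneg.mpr hab)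
  rw [hn, zpow_natCast, add_pow, Int.toNat_natCast]
  refine Finset.sum_nbij' (fun k => a + k) (fun c => (c - a).toNat) ?_ ?_ ?_ ?_ ?_
  · intro k hk
    simp only [Finset.mem_range, Finset.mem_Icc] at hk ⊢
    omega
  · intro c hc
    simp only [Finset.mem_range, Finset.mem_Icc] at hc ⊢
    omega
  · intro k _
    simp
  · intro c hc
    simp only [Finset.mem_Icc] at hc
    omega
  · intro k hk
    simp only [Finset.mem_range] at hk
    have hbk : b - (a + k) = ((n - k : ℕ) : ℤ) := by omega
    simp [hbk, ← zpow_natCast]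

theorem esymm_eq_multiset_esymm (n r : ℕ) (z : Fin n → ℝ) :
    esymm n r z = (univ.val.map z).esymm r :=
  (Finset.esymm_map_val z univ r).symm

theorem esymm_zero (n : ℕ) (z : Fin n → ℝ) : esymm n 0 z = 1 := by
  simp [esymm]

theorem esymm_of_lt (n r : ℕ) (h : n < r) (z : Fin n → ℝ) : esymm n r z = 0 := by
  rw [esymm, Finset.powersetCard_eq_empty.mpr (by simpa using h), Finset.sum_empty]

theorem esymm_pos (n r : ℕ) (h : r ≤ n) (z : Fin n → ℝ) (hz : ∀ i, 0 < z i) :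
    0 < esymm n r z :=
  Finset.sum_pos (fun s _ => Finset.prod_pos fun i _ => hz i)
    (Finset.powersetCard_nonempty.mpr (by simpa using h))

theorem esymm_succ (n r : ℕ) (hr : 0 < r) (z : Fin (n + 1) → ℝ) :
    esymm (n + 1) r z =
      esymm n r (fun i => z (Fin.castSucc i)) +
        z (Fin.last n) * esymm n (r - 1) (fun i => z (Fin.castSucc i)) := by
  obtain ⟨r, rfl⟩ := Nat.exists_eq_add_of_lt hr
  simp only [esymm_eq_multiset_esymm, Fin.univ_castSuccEmb, Finset.cons_val, Multiset.map_cons,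
    Finset.map_val, Multiset.map_map]
  exact Multiset.esymm_cons_succ _ _ _

theorem esymm_succ_self (n : ℕ) (z : Fin (n + 1) → ℝ) :
    esymm (n + 1) (n + 1) z = z (Fin.last n) * esymm n n (fun i => z (Fin.castSucc i)) := by
  rw [esymm_succ n (n + 1) n.succ_pos, esymm_of_lt n (n + 1) n.lt_succ_self, zero_add,
    Nat.add_sub_cancel]

theorem psiT_eq_prod_div_zpow (m : ℕ) (z : Fin m → ℝ) (he : ∀ r < m, esymm m r z ≠ 0)
    (p : Fin m → ℤ) :
    psiT m z p = ∏ i : Fin m, (esymm m (m - i) z / esymm m (m - i - 1) z) ^ p i := by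
  cases m with
  | zero => rfl
  | succ n =>
    have hden : ∀ i : Fin n, esymm (n + 1) (n - i) z ≠ 0 := fun i => he _ (by omega)
    rw [psiT]
    simp only [div_zpow, Finset.prod_div_distrib, zpow_sub₀ (hden _)]
    rw [Fin.prod_univ_succ, Fin.prod_univ_castSucc (fun i => esymm (n + 1) (n + 1 - i - 1) z ^ p i)]
    simp [esymm_zero, mul_div_assoc, Nat.sub_sub, Nat.add_sub_add_right]

theorem esymm_zpow_mul_prod_eq_psiT (n : ℕ) (w : Fin n → ℝ) (he : ∀ r ≤ n, esymm n r w ≠ 0)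
    (p : Fin (n + 1) → ℤ) (q : Fin n → ℤ) :
    esymm n n w ^ p 0 * ∏ i : Fin n,
        (esymm n (n - i) w ^ (q i - p i.castSucc) * esymm n (n - i - 1) w ^ (p i.succ - q i)) =
      psiT n w q := by
  have htel : esymm n n w ^ p 0 * ∏ i : Fin n, esymm n (n - i - 1) w ^ p i.succ =
      ∏ i : Fin n, esymm n (n - i) w ^ p i.castSucc := by
    -- both sides are `∏_{j ≤ n} e_{n-j}^{p_j}`, the last factor being `e_0^{p_n} = 1`
    have h := (Fin.prod_univ_succ fun j => esymm n (n - j) w ^ p j).symm.trans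
      (Fin.prod_univ_castSucc _)
    simpa [esymm_zero, Nat.sub_sub] using h
  have hfactor : ∀ i : Fin n,
      esymm n (n - i) w ^ (q i - p i.castSucc) * esymm n (n - i - 1) w ^ (p i.succ - q i) =
        (esymm n (n - i) w / esymm n (n - i - 1) w) ^ q i *
          (esymm n (n - i - 1) w ^ p i.succ / esymm n (n - i) w ^ p i.castSucc) := by
    intro i
    rw [zpow_sub₀ (he _ (by omega)), zpow_sub₀ (he _ (by omega)), div_zpow]
    ring
  have hE : ∏ i : Fin n, esymm n (n - i) w ^ p i.castSucc ≠ 0 :=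
    Finset.prod_ne_zero_iff.mpr fun i _ => zpow_ne_zero _ (he _ (by omega))
  rw [psiT_eq_prod_div_zpow n w (fun r hr => he r hr.le),
    Finset.prod_congr rfl fun i _ => hfactor i, Finset.prod_mul_distrib, Finset.prod_div_distrib,
    mul_left_comm, ← mul_div_assoc, htel, div_self hE, mul_one]

theorem mul_zpow_mul_prod_eq_psiT (ℓ : ℕ) (w : Fin ℓ → ℝ) (he : ∀ r ≤ ℓ, esymm ℓ r w ≠ 0)
    {t : ℝ} (ht : t ≠ 0) (p : Fin (ℓ + 1) → ℤ) (q : Fin ℓ → ℤ) (c : Fin ℓ → ℝ) :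
    (t * esymm ℓ ℓ w) ^ p 0 * ∏ i : Fin ℓ,
        (esymm ℓ (ℓ - i) w ^ (q i - p i.castSucc) *
          (t * esymm ℓ (ℓ - i - 1) w) ^ (p i.succ - q i) * c i) =
      t ^ ((∑ i, p i) - ∑ i, q i) * (∏ i, c i) * psiT ℓ w q := by
  have hexp : p 0 + ∑ i : Fin ℓ, (p i.succ - q i) = (∑ i, p i) - ∑ i, q i := by
    rw [Finset.sum_sub_distrib, Fin.sum_univ_succ p]
    ring
  calc _ = (t ^ p 0 * ∏ i : Fin ℓ, t ^ (p i.succ - q i)) * (∏ i, c i) *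
        (esymm ℓ ℓ w ^ p 0 * ∏ i : Fin ℓ,
          (esymm ℓ (ℓ - i) w ^ (q i - p i.castSucc) *
            esymm ℓ (ℓ - i - 1) w ^ (p i.succ - q i))) := by
        simp only [mul_zpow, Finset.prod_mul_distrib]
        ring
    _ = _ := by
        rw [esymm_zpow_mul_prod_eq_psiT ℓ w he, Finset.prod_zpow_eq_zpow_sum₀ ht, ← zpow_add₀ ht,
          hexp]

/-- Recursive relation for `ψ̃` with ordinary binomial coefficients. -/
theorem psiT_recursion (ℓ : ℕ) (z : Fin (ℓ + 1) → ℝ) (hz : ∀ i, 0 < z i)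
    (p : Fin (ℓ + 1) → ℤ) (hp : Monotone p) :
    psiT (ℓ + 1) z p =
      ∑ mid ∈ Fintype.piFinset
          (fun i : Fin ℓ => Finset.Icc (p (Fin.castSucc i)) (p (Fin.succ i))),
        z (Fin.last ℓ) ^ ((∑ i, p i) - ∑ i, mid i) *
          (∏ i : Fin ℓ,
            ((p (Fin.succ i) - p (Fin.castSucc i)).toNat.choose
              ((mid i - p (Fin.castSucc i)).toNat) : ℝ)) *
          psiT ℓ (fun i => z (Fin.castSucc i)) mid := by
  set w : Fin ℓ → ℝ := fun i => z (Fin.castSucc i)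
  have he : ∀ r ≤ ℓ, esymm ℓ r w ≠ 0 := fun r hr => (esymm_pos ℓ r hr w fun i => hz _).ne'
  have hbinom : ∀ i : Fin ℓ, esymm (ℓ + 1) (ℓ - i) z ^ (p i.succ - p i.castSucc) =
      ∑ c ∈ Icc (p i.castSucc) (p i.succ), esymm ℓ (ℓ - i) w ^ (c - p i.castSucc) *
        (z (Fin.last ℓ) * esymm ℓ (ℓ - i - 1) w) ^ (p i.succ - c) *
          ((p i.succ - p i.castSucc).toNat.choose (c - p i.castSucc).toNat : ℝ) := fun i => by
    rw [esymm_succ ℓ (ℓ - i) (by omega) z]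
    exact add_zpow_eq_sum_Icc _ _ (hp (Fin.castSucc_le_succ i))
  rw [psiT, esymm_succ_self, Finset.prod_congr rfl fun i _ => hbinom i, Finset.prod_univ_sum,
    Finset.mul_sum]
  exact Finset.sum_congr rfl fun q _ => mul_zpow_mul_prod_eq_psiT ℓ w he (hz _).ne' p q _
end
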